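/- Under the FISTA setup (f convex β-smooth, g convex lsc proper, F = f + g with minimizer set S nonempty, μ = min F, parameters t_k with t_0 = 1, t_k ≥ (k+2)/2, t_k² ≥ t_{k+1}² − t_{k+1}, iterates x_{k+1} = T y_k, y_{k+1} = x_{k+1} + ((t_k−1)/t_{k+1})(x_{k+1} − x_k), auxiliary z_k = (1−t_k)x_k + t_k y_k), for every s ∈ S the quantities ξ_{k+1}(s) := t_k² (F(x_{k+1}) − μ) + (β/2)‖z_{k+1} − s‖² satisfy 0 ≤ ξ_{k+1}(s) ≤ ξ_k(s) ≤ … ≤ ξ_1(s) ≤ (β/2)‖x_0 − s‖². Consequently (ξ_k(s)) converges and (z_k) is bounded. -/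

import Mathlib

/-!
The energy `ξ_{k+1}(s) = t_k² (F x_{k+1} - μ) + β/2 ‖z_{k+1} - s‖²` is a Lyapunov function. The
fundamental prox-grad inequality `F (T y) ≤ F u + β/2 (‖u - y‖² - ‖u - T y‖²)` (the variational
inequality of the prox step, plus the gradient inequality and the descent lemma for `f`) is applied
at `u = (1 - 1/t_k) x_k + (1/t_k) s`. Since `z_k - s = t_k (y_k - u)`,
`z_{k+1} - s = t_k (x_{k+1} - u)` and `F u - μ ≤ (1 - 1/t_k) (F x_k - μ)`, multiplying by `t_k²`
gives `ξ_{k+1} ≤ (t_k² - t_k) (F x_k - μ) + β/2 ‖z_k - s‖²`, and `t_k² - t_k ≤ t_{k-1}²` bounds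
this by `ξ_k`. The extended-valued `g` enters only through its real-valued restriction to its
effective domain.
-/

open Filter Set
open scoped RealInnerProductSpace Topology

theorem EReal.ne_top_of_add_coe_le {a b : EReal} {r q : ℝ} (h : a + r ≤ b + q) (hb : b ≠ ⊤) :
    a ≠ ⊤ := by
  rintro rfl
  rw [EReal.top_add_coe, top_le_iff] at h
  exact EReal.add_ne_top hb (EReal.coe_ne_top q) h

theorem EReal.isMinOn_toReal_add {α : Type*} {φ : α → EReal} {h : α → ℝ} {p : α}
    (hbot : ∀ x, φ x ≠ ⊥) (hmin : ∀ u, φ p + h p ≤ φ u + h u) :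
    IsMinOn (fun u => (φ u).toReal + h u) {u | φ u ≠ ⊤} p := by
  refine isMinOn_iff.2 fun u hu => ?_
  have hpu := hmin u
  rw [← EReal.coe_toReal (EReal.ne_top_of_add_coe_le hpu hu) (hbot p),
    ← EReal.coe_toReal hu (hbot u)] at hpu
  exact_mod_cast hpu

theorem convexOn_toReal_of_ereal {E : Type*} [AddCommGroup E] [Module ℝ E] {g : E → EReal}
    (hgconv : ∀ x y : E, ∀ a b : ℝ, 0 ≤ a → 0 ≤ b → a + b = 1 →
      g (a • x + b • y) ≤ (a : EReal) * g x + (b : EReal) * g y)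
    (hbot : ∀ x, g x ≠ ⊥) :
    ConvexOn ℝ {u | g u ≠ ⊤} (fun u => (g u).toReal) := by
  have hcomb : ∀ ⦃x⦄, g x ≠ ⊤ → ∀ ⦃y⦄, g y ≠ ⊤ → ∀ ⦃a b : ℝ⦄, 0 ≤ a → 0 ≤ b → a + b = 1 →
      g (a • x + b • y) ≤ ((a * (g x).toReal + b * (g y).toReal : ℝ) : EReal) := by
    intro x hx y hy a b ha hb hab
    have := hgconv x y a b ha hb hab
    rwa [← EReal.coe_toReal hx (hbot x), ← EReal.coe_toReal hy (hbot y)] at this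
  refine ⟨fun x hx y hy a b ha hb hab =>
    ne_top_of_le_ne_top (EReal.coe_ne_top _) (hcomb hx hy ha hb hab), ?_⟩
  intro x hx y hy a b ha hb hab
  have := EReal.toReal_le_toReal (hcomb hx hy ha hb hab) (hbot _) (EReal.coe_ne_top _)
  norm_cast at this

section InnerProductSpace

variable {X : Type*} [NormedAddCommGroup X] [InnerProductSpace ℝ X]

theorem HasGradientAt.hasDerivAt_comp_lineMap [CompleteSpace X] {f : X → ℝ} {f' : X → X}
    {a b : X} {τ : ℝ}
    (hf : HasGradientAt f (f' (AffineMap.lineMap a b τ)) (AffineMap.lineMap a b τ)) :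
    HasDerivAt (fun τ : ℝ => f (AffineMap.lineMap a b τ))
      ⟪f' (AffineMap.lineMap a b τ), b - a⟫ τ := by
  have h := hf.hasFDerivAt.comp_hasDerivAt τ (AffineMap.hasDerivAt_lineMap (𝕜 := ℝ))
  simp only [InnerProductSpace.toDual_apply_apply] at h
  exact h

theorem ConvexOn.add_inner_gradient_le [CompleteSpace X] {f : X → ℝ} {f' : X → X}
    (hf : ConvexOn ℝ univ f) (hf' : ∀ x, HasGradientAt f (f' x) x) (a b : X) :
    f a + ⟪f' a, b - a⟫ ≤ f b := by
  have hconv : ConvexOn ℝ univ (fun τ : ℝ => f (AffineMap.lineMap a b τ)) :=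
    hf.comp_affineMap (AffineMap.lineMap a b)
  have hderiv := (hf' (AffineMap.lineMap a b (0:ℝ))).hasDerivAt_comp_lineMap
  have hslope := hconv.le_slope_of_hasDerivAt (mem_univ 0) (mem_univ 1) zero_lt_one hderiv
  simp only [slope_def_field, AffineMap.lineMap_apply_one, AffineMap.lineMap_apply_zero, sub_zero,
    div_one] at hslope
  linarith

theorem le_add_inner_gradient_add_sq_of_lipschitzWith [CompleteSpace X] {f : X → ℝ}
    {f' : X → X} {L : ℝ} (hL : 0 ≤ L) (hf' : ∀ x, HasGradientAt f (f' x) x)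
    (hlip : LipschitzWith (Real.toNNReal L) f') (a b : X) :
    f b ≤ f a + ⟪f' a, b - a⟫ + L / 2 * ‖b - a‖ ^ 2 := by
  set v := b - a
  have hline (τ : ℝ) := (hf' (AffineMap.lineMap a b τ)).hasDerivAt_comp_lineMap
  have hB (τ : ℝ) : HasDerivAt (fun τ : ℝ => f a + τ * ⟪f' a, v⟫ + L / 2 * τ ^ 2 * ‖v‖ ^ 2)
      (⟪f' a, v⟫ + L * τ * ‖v‖ ^ 2) τ := by
    refine ((((hasDerivAt_id τ).mul_const ⟪f' a, v⟫).const_add (f a)).add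
      (((hasDerivAt_pow 2 τ).const_mul (L / 2)).mul_const (‖v‖ ^ 2))).congr_deriv ?_
    simp only [one_mul, Nat.cast_ofNat, Nat.add_one_sub_one, pow_one]; ring
  have hbound : ∀ τ ∈ Ico (0 : ℝ) 1,
      ⟪f' (AffineMap.lineMap a b τ), v⟫ ≤ ⟪f' a, v⟫ + L * τ * ‖v‖ ^ 2 := by
    intro τ hτ
    have hlipτ : ‖f' (AffineMap.lineMap a b τ) - f' a‖ ≤ L * (τ * ‖v‖) := by
      have := hlip.dist_le_mul (AffineMap.lineMap a b τ) a
      rwa [Real.coe_toNNReal _ hL, dist_eq_norm, dist_eq_norm, AffineMap.lineMap_apply_module',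
        add_sub_cancel_right, norm_smul, Real.norm_of_nonneg hτ.1] at this
    calc ⟪f' (AffineMap.lineMap a b τ), v⟫
        = ⟪f' a, v⟫ + ⟪f' (AffineMap.lineMap a b τ) - f' a, v⟫ := by rw [inner_sub_left]; ring
      _ ≤ ⟪f' a, v⟫ + L * (τ * ‖v‖) * ‖v‖ := by
        gcongr
        exact (real_inner_le_norm _ _).trans (mul_le_mul_of_nonneg_right hlipτ (norm_nonneg v))
      _ = ⟪f' a, v⟫ + L * τ * ‖v‖ ^ 2 := by ring
  have hcompare := image_le_of_deriv_right_le_deriv_boundary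
    (fun τ _ => (hline τ).continuousAt.continuousWithinAt) (fun τ _ => (hline τ).hasDerivWithinAt)
    (by simp) (fun τ _ => (hB τ).continuousAt.continuousWithinAt)
    (fun τ _ => (hB τ).hasDerivWithinAt) hbound (right_mem_Icc.2 zero_le_one)
  simpa using hcompare

theorem IsMinOn.le_add_inner_of_convexOn {G : X → ℝ} {C : Set X} {β : ℝ} {w p u : X}
    (hG : ConvexOn ℝ C G)
    (hmin : IsMinOn (fun v => G v + β / 2 * ‖v - w‖ ^ 2) C p) (hp : p ∈ C) (hu : u ∈ C) :
    G p ≤ G u + β * ⟪p - w, u - p⟫ := by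
  have hsegment : ∀ lam ∈ Ioc (0 : ℝ) 1,
      G p ≤ G u + β * ⟪p - w, u - p⟫ + lam * (β / 2 * ‖u - p‖ ^ 2) := by
    rintro lam ⟨hlam0, hlam1⟩
    have hG_le := hG.2 hp hu (sub_nonneg.2 hlam1) hlam0.le (sub_add_cancel 1 lam)
    have hmin_le := isMinOn_iff.1 hmin _ (hG.1 hp hu (sub_nonneg.2 hlam1) hlam0.le
      (sub_add_cancel 1 lam))
    have hvec : (1 - lam) • p + lam • u - w = (p - w) + lam • (u - p) := by module
    simp only [hvec, norm_add_sq_real, inner_smul_right, norm_smul, Real.norm_of_nonneg hlam0.le,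
      smul_eq_mul] at hmin_le hG_le
    have : lam * G p ≤ lam * (G u + β * ⟪p - w, u - p⟫ + lam * (β / 2 * ‖u - p‖ ^ 2)) := by
      nlinarith
    exact le_of_mul_le_mul_left this hlam0
  have hlim : Tendsto (fun lam : ℝ => G u + β * ⟪p - w, u - p⟫ + lam * (β / 2 * ‖u - p‖ ^ 2))
      (𝓝[>] 0) (𝓝 (G u + β * ⟪p - w, u - p⟫)) := by
    refine tendsto_nhdsWithin_of_tendsto_nhds ?_
    simpa using ((continuous_id.mul continuous_const).const_add
      (G u + β * ⟪p - w, u - p⟫)).tendsto (0 : ℝ)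
  exact ge_of_tendsto hlim (mem_of_superset (Ioc_mem_nhdsGT zero_lt_one) hsegment)

theorem fundamental_prox_grad_inequality [CompleteSpace X] {f G : X → ℝ} {f' : X → X}
    {C : Set X} {β : ℝ} (hβ : 0 < β) (hf : ConvexOn ℝ univ f)
    (hf' : ∀ x, HasGradientAt f (f' x) x) (hlip : LipschitzWith (Real.toNNReal β) f')
    (hG : ConvexOn ℝ C G) {y p u : X}
    (hmin : IsMinOn (fun v => G v + β / 2 * ‖v - (y - β⁻¹ • f' y)‖ ^ 2) C p)
    (hp : p ∈ C) (hu : u ∈ C) :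
    f p + G p ≤ f u + G u + β / 2 * (‖u - y‖ ^ 2 - ‖u - p‖ ^ 2) := by
  have hprox := hmin.le_add_inner_of_convexOn hG hp hu
  have hconv := hf.add_inner_gradient_le hf' y u
  have hdesc := le_add_inner_gradient_add_sq_of_lipschitzWith hβ.le hf' hlip y p
  have hpw : p - (y - β⁻¹ • f' y) = (p - y) + β⁻¹ • f' y := by abel
  have hinner : β * ⟪p - (y - β⁻¹ • f' y), u - p⟫ = β * ⟪p - y, u - p⟫ + ⟪f' y, u - p⟫ := by
    rw [hpw, inner_add_left, real_inner_smul_left, mul_add, mul_inv_cancel_left₀ hβ.ne']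
  have huy : u - y = (u - p) + (p - y) := by abel
  have hsq : ‖u - y‖ ^ 2 = ‖u - p‖ ^ 2 + 2 * ⟪p - y, u - p⟫ + ‖p - y‖ ^ 2 := by
    rw [huy, norm_add_sq_real, real_inner_comm]
  have hsplit : ⟪f' y, u - y⟫ = ⟪f' y, u - p⟫ + ⟪f' y, p - y⟫ := by
    rw [huy, inner_add_right]
  rw [hsq]
  linarith

theorem fundamental_prox_grad_inequality_of_ereal [CompleteSpace X] {f : X → ℝ} {f' : X → X}
    {g : X → EReal} {β : ℝ} (hβ : 0 < β) (hf : ConvexOn ℝ univ f)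
    (hf' : ∀ x, HasGradientAt f (f' x) x) (hlip : LipschitzWith (Real.toNNReal β) f')
    (hgconv : ∀ x y : X, ∀ a b : ℝ, 0 ≤ a → 0 ≤ b → a + b = 1 →
      g (a • x + b • y) ≤ (a : EReal) * g x + (b : EReal) * g y)
    (hbot : ∀ x, g x ≠ ⊥) {p y : X}
    (hp : ∀ u : X, g p + (((β / 2) * ‖p - (y - β⁻¹ • f' y)‖ ^ 2 : ℝ) : EReal)
        ≤ g u + (((β / 2) * ‖u - (y - β⁻¹ • f' y)‖ ^ 2 : ℝ) : EReal))
    {u : X} (hu : g u ≠ ⊤) :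
    g p ≠ ⊤ ∧
      f p + (g p).toReal ≤ f u + (g u).toReal + β / 2 * (‖u - y‖ ^ 2 - ‖u - p‖ ^ 2) := by
  have hpdom : g p ≠ ⊤ := EReal.ne_top_of_add_coe_le (hp u) hu
  exact ⟨hpdom, fundamental_prox_grad_inequality hβ hf hf' hlip
    (convexOn_toReal_of_ereal hgconv hbot) (EReal.isMinOn_toReal_add hbot hp) hpdom hu⟩

end InnerProductSpace

theorem fista_extrapolation_eq {E : Type*} [AddCommGroup E] [Module ℝ E] {τ τ' : ℝ}
    (hτ' : τ' ≠ 0) (x x' : E) :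
    (1 - τ') • x' + τ' • (x' + ((τ - 1) / τ') • (x' - x)) = τ • x' + (1 - τ) • x := by
  match_scalars <;> field_simp <;> ring

theorem fista_step_le {X : Type*} [NormedAddCommGroup X] [NormedSpace ℝ X] {Φ : X → ℝ}
    {C : Set X} (hΦ : ConvexOn ℝ C Φ) {β τ : ℝ} (hτ : 1 ≤ τ) {s x y x' z z' : X}
    (hs : s ∈ C) (hΦs : Φ s = 0) (hx : x ∈ C)
    (hprox : ∀ u ∈ C, Φ x' ≤ Φ u + β / 2 * (‖u - y‖ ^ 2 - ‖u - x'‖ ^ 2))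
    (hz : z = (1 - τ) • x + τ • y) (hz' : z' = τ • x' + (1 - τ) • x) :
    τ ^ 2 * Φ x' + β / 2 * ‖z' - s‖ ^ 2 ≤ (τ ^ 2 - τ) * Φ x + β / 2 * ‖z - s‖ ^ 2 := by
  have hτ0 : 0 < τ := zero_lt_one.trans_le hτ
  have hlam0 : 0 ≤ τ⁻¹ := inv_nonneg.2 hτ0.le
  have hlam1 : 0 ≤ 1 - τ⁻¹ := sub_nonneg.2 (inv_le_one_of_one_le₀ hτ)
  set u := (1 - τ⁻¹) • x + τ⁻¹ • s
  have hΦu : Φ u ≤ (1 - τ⁻¹) * Φ x := by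
    simpa [hΦs] using hΦ.2 hx hs hlam1 hlam0 (sub_add_cancel 1 τ⁻¹)
  have hnorm {v w : X} (h : v = (1 - τ) • x + τ • w) : ‖v - s‖ ^ 2 = τ ^ 2 * ‖u - w‖ ^ 2 := by
    have : v - s = τ • (w - u) := by
      rw [h]; match_scalars <;> field_simp; ring
    rw [this, norm_smul, Real.norm_of_nonneg hτ0.le, mul_pow, norm_sub_rev]
  have hcoef : τ ^ 2 * (1 - τ⁻¹) = τ ^ 2 - τ := by field_simp
  rw [hnorm hz, hnorm (hz'.trans (add_comm _ _))]
  calc τ ^ 2 * Φ x' + β / 2 * (τ ^ 2 * ‖u - x'‖ ^ 2)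
      ≤ τ ^ 2 * ((1 - τ⁻¹) * Φ x + β / 2 * (‖u - y‖ ^ 2 - ‖u - x'‖ ^ 2))
        + β / 2 * (τ ^ 2 * ‖u - x'‖ ^ 2) := by
        gcongr
        exact (hprox u (hΦ.1 hx hs hlam1 hlam0 (sub_add_cancel 1 τ⁻¹))).trans (by gcongr)
    _ = (τ ^ 2 - τ) * Φ x + β / 2 * (τ ^ 2 * ‖u - y‖ ^ 2) := by rw [← hcoef]; ring

section FISTA

variable {X : Type*} [NormedAddCommGroup X]

/-- The paper's `ξ_{k+1}(s)`, with `Φ = F - μ`. -/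
noncomputable def fistaEnergy (β : ℝ) (Φ : X → ℝ) (t : ℕ → ℝ) (x z : ℕ → X) (s : X) (k : ℕ) :
    ℝ :=
  t k ^ 2 * Φ (x (k + 1)) + β / 2 * ‖z (k + 1) - s‖ ^ 2

variable {β : ℝ} {Φ : X → ℝ} {t : ℕ → ℝ} {x y z : ℕ → X} {s : X}

theorem half_mul_norm_sq_le_fistaEnergy {k : ℕ} (hΦx : 0 ≤ Φ (x (k + 1))) :
    β / 2 * ‖z (k + 1) - s‖ ^ 2 ≤ fistaEnergy β Φ t x z s k := by
  unfold fistaEnergy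
  nlinarith [mul_nonneg (sq_nonneg (t k)) hΦx]

theorem fistaEnergy_nonneg (hβ : 0 ≤ β) {k : ℕ} (hΦx : 0 ≤ Φ (x (k + 1))) :
    0 ≤ fistaEnergy β Φ t x z s k :=
  (half_mul_norm_sq_le_fistaEnergy hΦx).trans' (by positivity)

theorem norm_sub_le_of_fistaEnergy_antitone (hβ : 0 < β) (hΦx : ∀ k, 0 ≤ Φ (x (k + 1)))
    (hanti : Antitone (fistaEnergy β Φ t x z s))
    (hE0 : fistaEnergy β Φ t x z s 0 ≤ β / 2 * ‖x 0 - s‖ ^ 2) (hz0 : z 0 = x 0) (k : ℕ) :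
    ‖z k - s‖ ≤ ‖x 0 - s‖ := by
  rcases k with _ | k
  · rw [hz0]
  · refine (sq_le_sq₀ (norm_nonneg _) (norm_nonneg _)).1 (le_of_mul_le_mul_left ?_ (half_pos hβ))
    exact (half_mul_norm_sq_le_fistaEnergy (hΦx k)).trans ((hanti k.zero_le).trans hE0)

variable [NormedSpace ℝ X]

theorem fistaEnergy_zero_le (ht0 : t 0 = 1) (hΦs : Φ s = 0) (hy0 : y 0 = x 0)
    (hy : y 1 = x 1 + ((t 0 - 1) / t 1) • (x 1 - x 0))
    (hz : z 1 = (1 - t 1) • x 1 + t 1 • y 1)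
    (hprox : Φ (x 1) ≤ Φ s + β / 2 * (‖s - y 0‖ ^ 2 - ‖s - x 1‖ ^ 2)) :
    fistaEnergy β Φ t x z s 0 ≤ β / 2 * ‖x 0 - s‖ ^ 2 := by
  have hz1 : z 1 = x 1 := by
    rw [hz, hy, ht0, sub_self, zero_div, zero_smul, add_zero, ← add_smul, sub_add_cancel,
      one_smul]
  rw [hΦs, hy0, norm_sub_rev s, norm_sub_rev s] at hprox
  simp only [fistaEnergy, ht0, hz1]
  linarith

theorem fistaEnergy_antitone {C : Set X} (hΦ : ConvexOn ℝ C Φ) (hs : s ∈ C) (hΦs : Φ s = 0)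
    (hΦ_nonneg : ∀ u ∈ C, 0 ≤ Φ u) (ht : ∀ k, 1 ≤ t k)
    (htrec : ∀ k, t (k + 1) ^ 2 - t (k + 1) ≤ t k ^ 2) (hxC : ∀ k, x (k + 1) ∈ C)
    (hprox : ∀ k, ∀ u ∈ C,
      Φ (x (k + 1)) ≤ Φ u + β / 2 * (‖u - y k‖ ^ 2 - ‖u - x (k + 1)‖ ^ 2))
    (hy : ∀ k, y (k + 1) = x (k + 1) + ((t k - 1) / t (k + 1)) • (x (k + 1) - x k))
    (hz : ∀ k, z k = (1 - t k) • x k + t k • y k) :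
    Antitone (fistaEnergy β Φ t x z s) := by
  have hz' (k : ℕ) : z (k + 1) = t k • x (k + 1) + (1 - t k) • x k := by
    rw [hz, hy, fista_extrapolation_eq (zero_lt_one.trans_le (ht (k + 1))).ne']
  refine antitone_nat_of_succ_le fun k => ?_
  have hstep := fista_step_le hΦ (ht (k + 1)) hs hΦs (hxC k) (hprox (k + 1)) (hz _) (hz' _)
  have hrec := mul_le_mul_of_nonneg_right (htrec k) (hΦ_nonneg _ (hxC k))
  unfold fistaEnergy
  linarith

end FISTA

theorem fista_lyapunov_monotone_general
    {X : Type*} [NormedAddCommGroup X] [InnerProductSpace ℝ X] [CompleteSpace X]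
    (β : ℝ) (hβ : 0 < β)
    (f : X → ℝ) (hf : ConvexOn ℝ Set.univ f)
    (f' : X → X) (hf' : ∀ x, HasGradientAt f (f' x) x)
    (hlip : LipschitzWith (Real.toNNReal β) f')
    (g : X → EReal)
    (hgconv : ∀ x y : X, ∀ a b : ℝ, 0 ≤ a → 0 ≤ b → a + b = 1 →
      g (a • x + b • y) ≤ (a : EReal) * g x + (b : EReal) * g y)
    (hg_ne_bot : ∀ x, g x ≠ ⊥)
    (T : X → X)
    (hT : ∀ y u : X,
      g (T y) + (((β / 2) * ‖T y - (y - β⁻¹ • f' y)‖ ^ 2 : ℝ) : EReal)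
        ≤ g u + (((β / 2) * ‖u - (y - β⁻¹ • f' y)‖ ^ 2 : ℝ) : EReal))
    (F : X → EReal) (hF : ∀ x, F x = (f x : EReal) + g x)
    -- the parameter sequence
    (t : ℕ → ℝ) (ht0 : t 0 = 1)
    (htlow : ∀ k : ℕ, ((k : ℝ) + 2) / 2 ≤ t k)
    (htrec : ∀ k : ℕ, (t (k + 1)) ^ 2 - t (k + 1) ≤ (t k) ^ 2)
    -- the FISTA iterates and the auxiliary sequence
    (x y z : ℕ → X) (hy0 : y 0 = x 0)
    (hx : ∀ k : ℕ, x (k + 1) = T (y k))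
    (hy : ∀ k : ℕ, y (k + 1) = x (k + 1) + ((t k - 1) / t (k + 1)) • (x (k + 1) - x k))
    (hz : ∀ k : ℕ, z k = (1 - t k) • x k + t k • y k)
    -- a minimizer s and the minimal value μ
    (s : X) (hs : ∀ v : X, F s ≤ F v)
    (μ : ℝ) (hμ : (μ : EReal) = F s)
    -- the Lyapunov quantities ξ_k for k ≥ 1
    (ξ : ℕ → EReal)
    (hξ : ∀ k : ℕ, 1 ≤ k →
      ξ k = (((t (k - 1)) ^ 2 : ℝ) : EReal) * (F (x k) - (μ : EReal))
              + (((β / 2) * ‖z k - s‖ ^ 2 : ℝ) : EReal)) :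
    (∀ k : ℕ, 1 ≤ k → 0 ≤ ξ k) ∧
    (∀ k : ℕ, 1 ≤ k → ξ (k + 1) ≤ ξ k) ∧
    ξ 1 ≤ (((β / 2) * ‖x 0 - s‖ ^ 2 : ℝ) : EReal) ∧
    (∃ l : EReal, Tendsto (fun k : ℕ => ξ (k + 1)) atTop (nhds l)) ∧
    (∃ M : ℝ, ∀ k : ℕ, ‖z k‖ ≤ M) := by
  set C : Set X := {u | g u ≠ ⊤}
  set Φ : X → ℝ := fun u => f u + (g u).toReal - μ
  have hFC : ∀ u ∈ C, F u = ((f u + (g u).toReal : ℝ) : EReal) := fun u hu => by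
    rw [hF, ← EReal.coe_toReal hu (hg_ne_bot u), EReal.toReal_coe, EReal.coe_add]
  have hsC : s ∈ C := fun h => EReal.coe_ne_top μ (by rw [hμ, hF, h, EReal.coe_add_top])
  have hΦs : Φ s = 0 := sub_eq_zero.2 (EReal.coe_injective (hFC s hsC ▸ hμ)).symm
  have hΦ_nonneg : ∀ u ∈ C, 0 ≤ Φ u := fun u hu =>
    sub_nonneg.2 (EReal.coe_le_coe_iff.1 (hμ ▸ hFC u hu ▸ hs u))
  have hGconv := convexOn_toReal_of_ereal hgconv hg_ne_bot
  have hΦconv : ConvexOn ℝ C Φ := ((hf.subset (subset_univ C) hGconv.1).add hGconv).add_const (-μ)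
  have hprox (k : ℕ) (u : X) (hu : u ∈ C) := hx k ▸
    fundamental_prox_grad_inequality_of_ereal hβ hf hf' hlip hgconv hg_ne_bot (hT (y k)) hu
  have hxC (k : ℕ) : x (k + 1) ∈ C := (hprox k s hsC).1
  have hproxΦ (k : ℕ) (u : X) (hu : u ∈ C) :
      Φ (x (k + 1)) ≤ Φ u + β / 2 * (‖u - y k‖ ^ 2 - ‖u - x (k + 1)‖ ^ 2) := by
    linarith [(hprox k u hu).2]
  have ht1 (k : ℕ) : 1 ≤ t k := by linarith [htlow k, (k.cast_nonneg : (0 : ℝ) ≤ k)]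
  have hanti := fistaEnergy_antitone hΦconv hsC hΦs hΦ_nonneg ht1 htrec hxC hproxΦ hy hz
  have hE0 := fistaEnergy_zero_le ht0 hΦs hy0 (hy 0) (hz 1) (hproxΦ 0 s hsC)
  have hE_nonneg (k : ℕ) := fistaEnergy_nonneg (t := t) (z := z) (s := s) hβ.le
    (hΦ_nonneg _ (hxC k))
  have hξE (k : ℕ) : ξ (k + 1) = fistaEnergy β Φ t x z s k := by
    rw [hξ (k + 1) le_add_self, Nat.add_sub_cancel, hFC _ (hxC k)]
    norm_cast
  have hzs := norm_sub_le_of_fistaEnergy_antitone hβ (fun k => hΦ_nonneg _ (hxC k)) hanti hE0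
    (by rw [hz, ht0, hy0, sub_self, zero_smul, one_smul, zero_add])
  refine ⟨fun k hk => ?_, fun k hk => ?_, hξE 0 ▸ EReal.coe_le_coe_iff.2 hE0, ?_,
    ⟨‖s‖ + ‖x 0 - s‖, fun k => (norm_le_norm_add_norm_sub' (z k) s).trans (by gcongr; exact hzs k)⟩⟩
  · obtain ⟨m, rfl⟩ := Nat.exists_eq_add_of_le' hk
    exact hξE m ▸ EReal.coe_nonneg.2 (hE_nonneg m)
  · obtain ⟨m, rfl⟩ := Nat.exists_eq_add_of_le' hk
    exact hξE m ▸ hξE (m + 1) ▸ EReal.coe_le_coe_iff.2 (hanti m.le_succ)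
  · have hbdd : BddBelow (Set.range (fistaEnergy β Φ t x z s)) :=
      ⟨0, by rintro _ ⟨k, rfl⟩; exact hE_nonneg k⟩
    exact ⟨_, (EReal.tendsto_coe.2 (tendsto_atTop_ciInf hanti hbdd)).congr fun k => (hξE k).symm⟩

theorem fista_lyapunov_monotone
    {X : Type*} [NormedAddCommGroup X] [InnerProductSpace ℝ X] [CompleteSpace X]
    (β : ℝ) (hβ : 0 < β)
    (f : X → ℝ) (hf : ConvexOn ℝ Set.univ f)
    (f' : X → X) (hf' : ∀ x, HasGradientAt f (f' x) x)
    (hlip : LipschitzWith (Real.toNNReal β) f')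
    (g : X → EReal)
    (hgconv : ∀ x y : X, ∀ a b : ℝ, 0 ≤ a → 0 ≤ b → a + b = 1 →
      g (a • x + b • y) ≤ (a : EReal) * g x + (b : EReal) * g y)
    (hglsc : LowerSemicontinuous g)
    (hg_ne_bot : ∀ x, g x ≠ ⊥) (hg_proper : ∃ x, g x ≠ ⊤)
    (T : X → X)
    (hT : ∀ y u : X,
      g (T y) + (((β / 2) * ‖T y - (y - β⁻¹ • f' y)‖ ^ 2 : ℝ) : EReal)
        ≤ g u + (((β / 2) * ‖u - (y - β⁻¹ • f' y)‖ ^ 2 : ℝ) : EReal))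
    (F : X → EReal) (hF : ∀ x, F x = (f x : EReal) + g x)
    -- the parameter sequence
    (t : ℕ → ℝ) (htpos : ∀ k, 0 < t k) (ht0 : t 0 = 1)
    (htlow : ∀ k : ℕ, ((k : ℝ) + 2) / 2 ≤ t k)
    (htrec : ∀ k : ℕ, (t (k + 1)) ^ 2 - t (k + 1) ≤ (t k) ^ 2)
    -- the FISTA iterates and the auxiliary sequence
    (x y z : ℕ → X) (hy0 : y 0 = x 0)
    (hx : ∀ k : ℕ, x (k + 1) = T (y k))
    (hy : ∀ k : ℕ, y (k + 1) = x (k + 1) + ((t k - 1) / t (k + 1)) • (x (k + 1) - x k))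
    (hz : ∀ k : ℕ, z k = (1 - t k) • x k + t k • y k)
    -- a minimizer s and the minimal value μ
    (s : X) (hs : ∀ v : X, F s ≤ F v)
    (μ : ℝ) (hμ : (μ : EReal) = F s)
    -- the Lyapunov quantities ξ_k for k ≥ 1
    (ξ : ℕ → EReal)
    (hξ : ∀ k : ℕ, 1 ≤ k →
      ξ k = (((t (k - 1)) ^ 2 : ℝ) : EReal) * (F (x k) - (μ : EReal))
              + (((β / 2) * ‖z k - s‖ ^ 2 : ℝ) : EReal)) :
    (∀ k : ℕ, 1 ≤ k → 0 ≤ ξ k) ∧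
    (∀ k : ℕ, 1 ≤ k → ξ (k + 1) ≤ ξ k) ∧
    ξ 1 ≤ (((β / 2) * ‖x 0 - s‖ ^ 2 : ℝ) : EReal) ∧
    (∃ l : EReal, Tendsto (fun k : ℕ => ξ (k + 1)) atTop (nhds l)) ∧
    (∃ M : ℝ, ∀ k : ℕ, ‖z k‖ ≤ M) :=
  fista_lyapunov_monotone_general β hβ f hf f' hf' hlip g hgconv hg_ne_bot T hT F hF t ht0 htlow
    htrec x y z hy0 hx hy hz s hs μ hμ ξ hξ
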